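/- There exists a unimodular 18×18 integer matrix U_1 such that ᵗU_1 M_1 U_1 = E_8(-1) ⊕ E_8(-1) ⊕ [[0,3],[3,0]], where M_1 is as defined. -/

import Mathlib

open Matrix

noncomputable section

def A18 : Matrix (Fin 18) (Fin 18) ℤ :=
  Matrix.of fun i j => if i = j then -2 else if i.val + 1 = j.val ∨ j.val + 1 = i.val then 1 else 0

def E (i j : Fin 18) : Matrix (Fin 18) (Fin 18) ℤ := Matrix.single i j 1

def M1 : Matrix (Fin 18) (Fin 18) ℤ :=
  A18 - (E 7 8 + E 8 7) - (E 13 14 + E 14 13) + (E 12 14 + E 14 12)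
    + (E 2 16 + E 16 2) + (E 13 16 + E 16 13) - (E 15 16 + E 16 15)
    + (E 15 17 + E 17 15) - (E 14 15 + E 15 14) + 2 • E 17 17

def E8neg : Matrix (Fin 8) (Fin 8) ℤ :=
  !![-2,1,0,0,0,0,0,0; 1,-2,1,0,0,0,0,0; 0,1,-2,1,0,0,0,0; 0,0,1,-2,1,0,0,0;
     0,0,0,1,-2,1,1,0; 0,0,0,0,1,-2,0,0; 0,0,0,0,1,0,-2,1; 0,0,0,0,0,0,1,-2]

def e18 : (Fin 8 ⊕ (Fin 8 ⊕ Fin 2)) ≃ Fin 18 :=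
  (Equiv.sumCongr (Equiv.refl (Fin 8)) finSumFinEquiv).trans finSumFinEquiv

def target1 : Matrix (Fin 18) (Fin 18) ℤ :=
  Matrix.reindex e18 e18
    (Matrix.fromBlocks E8neg 0 0 (Matrix.fromBlocks E8neg 0 0 !![0,3;3,0]))

/-
Both identities below are finite computations over ℤ, which the kernel checks by evaluation.
Unimodularity of `U1` is certified by an explicit integral inverse `U1Inv`, so that no
18 × 18 determinant has to be expanded.
-/

def U1 : Matrix (Fin 18) (Fin 18) ℤ :=
  !![2, 0, 0, -1, 1, -1, -2, 4, -3, 4, -1, -1, -5, 9, 0, 3, -2, -49;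
    0, 0, 0, 0, 0, 0, 0, 0, -2, 2, 0, 0, -4, 6, 0, 2, -1, -23;
    2, 0, 0, -1, 1, -1, -2, 4, -5, 5, 0, -1, -9, 14, 1, 4, -3, -63;
    0, 0, 0, 0, 0, 0, 0, 0, -3, 2, 1, 0, -5, 6, 1, 2, -1, -25;
    2, 0, 0, -1, 1, -1, -1, 2, -4, 4, 0, -1, -6, 9, 1, 3, -2, -44;
    0, 0, 0, 0, 0, 0, 1, -2, -1, 0, 1, 1, -2, 1, 0, 1, 0, 0;
    -2, 0, 0, 1, -1, 1, 3, -6, 2, -4, 2, 2, 2, -6, 0, -2, 2, 38;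
    -1, 0, 0, 1, -1, 0, 2, -3, 1, -2, 1, 1, 1, -3, 0, -1, 1, 19;
    2, 0, 0, -1, 1, -1, -2, 4, -3, 4, 0, -2, -4, 8, 0, 2, -2, -42;
    0, 1, 0, -1, 0, 0, 0, 1, -2, 2, 1, -1, -3, 5, 0, 1, -1, -21;
    -2, 1, 1, -1, 0, 0, 1, -2, -1, 0, 2, 0, -2, 2, 0, 0, 0, 0;
    -3, 0, 2, -1, -1, 1, 3, -5, 0, -2, 3, 1, -1, -1, 0, -1, 1, 21;
    -1, 0, 2, -2, 0, 0, 1, -1, -4, 2, 2, 0, -5, 7, 0, 1, -1, -21;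
    0, 0, 1, -1, 0, 0, 0, 0, -3, 2, 1, 0, -4, 6, 0, 1, -1, -21;
    1, 0, 1, -2, 1, -1, -1, 3, -4, 4, 0, -1, -5, 9, 0, 2, -2, -42;
    3, 0, -1, -1, 2, -2, -3, 6, -2, 4, -2, -2, -2, 6, 0, 2, -2, -42;
    4, 0, 0, -2, 2, -2, -4, 8, -6, 8, -2, -2, -9, 16, 1, 4, -4, -84;
    6, 0, -1, -2, 3, -3, -6, 12, -4, 8, -4, -4, -4, 12, 0, 4, -4, -84]

def U1Inv : Matrix (Fin 18) (Fin 18) ℤ :=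
  !![4, -4, 0, -4, 4, 0, -3, 0, 4, 0, 0, -4, 0, -4, 4, -1, 0, -7;
    4, -4, 0, -4, 4, 0, -3, 0, 4, 0, 1, -5, 0, -5, 5, -2, 0, -7;
    4, -4, 0, -4, 4, 0, -3, 0, 5, -1, 1, -5, 0, -6, 6, -3, 0, -7;
    4, -4, 0, -4, 4, 0, -3, 0, 6, -1, 1, -6, 0, -7, 7, -3, 0, -8;
    6, -6, 0, -6, 6, 0, -4, -1, 8, -1, 1, -8, 0, -10, 10, -3, 0, -12;
    2, -2, 0, -2, 2, 0, -1, -1, 3, 0, 0, -3, 0, -4, 4, -2, 0, -4;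
    4, -4, 0, -4, 4, 0, -3, 0, 5, 0, 0, -5, 0, -7, 7, -2, 0, -8;
    6, -6, 0, -5, 5, 0, -5, 0, 6, 0, 0, -6, 0, -7, 7, -1, 0, -11;
    0, 0, 0, 0, 0, 0, 0, 0, 0, 0, 0, 1, -2, 1, 1, 0, 0, 0;
    4, -4, -1, -3, 4, 0, -4, 0, 4, 0, 0, -3, -3, -2, 6, 0, 0, -8;
    2, -3, 0, -1, 2, 0, -2, 0, 2, 0, 0, -1, -4, 1, 5, 0, -1, -4;
    2, -3, 0, -1, 2, 0, -2, 0, 1, 0, 0, -1, -5, 2, 6, 0, -1, -4;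
    4, -5, 0, -3, 5, -1, -4, 0, 3, 0, 0, -3, -6, 1, 9, 0, -2, -8;
    8, -8, 0, -7, 8, -1, -7, 0, 7, 0, 0, -7, -3, -5, 10, 0, -1, -15;
    4, -5, 0, -3, 5, -1, -4, 0, 3, 0, 0, -3, -4, -1, 7, 0, -1, -8;
    4, -4, 0, -3, 4, 0, -4, 0, 3, 0, 0, -3, -2, -2, 5, 0, -1, -7;
    25, -22, -2, -19, 21, -2, -19, 0, 21, 0, 0, -21, 0, -21, 21, 0, 0, -42;
    1, -1, 0, -1, 1, 0, -1, 0, 1, 0, 0, -1, 0, -1, 1, 0, 0, -2]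

theorem Matrix.det_eq_one_or_neg_one_of_mul_eq_one {n : Type*} [Fintype n] [DecidableEq n]
    {U V : Matrix n n ℤ} (h : U * V = 1) : U.det = 1 ∨ U.det = -1 :=
  Int.isUnit_iff.mp (isUnit_det_of_right_inverse h)

theorem U1_mul_U1Inv : U1 * U1Inv = 1 := by decide +kernel

theorem U1_transpose_mul_M1_mul_U1 : U1ᵀ * M1 * U1 = target1 := by decide +kernel

theorem stmt3 : ∃ U : Matrix (Fin 18) (Fin 18) ℤ,
    (U.det = 1 ∨ U.det = -1) ∧ Uᵀ * M1 * U = target1 :=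
  ⟨U1, det_eq_one_or_neg_one_of_mul_eq_one U1_mul_U1Inv, U1_transpose_mul_M1_mul_U1⟩
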